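/- arXiv:2212.11689 — 8 statements merged into one kernel-verified Lean document; each statement's English description precedes it below -/
import Mathlib

section
/- The floor quotient relation ≼₁ defines a partial order on the positive integers: it is reflexive, antisymmetric, and transitive. Moreover it is an approximate divisor order: for all positive integers d and n, if d divides n then d ≼₁ n, and if d ≼₁ n then d ≤ n. -/
/-- `d` is a floor quotient of `n`: `d = ⌊n/k⌋` for some positive integer `k`. -/
def FloorQuotient (d n : ℕ) : Prop := ∃ k : ℕ, 0 < k ∧ d = n / k

namespace FloorQuotient

theorem refl (n : ℕ) : FloorQuotient n n :=
  ⟨1, one_pos, (Nat.div_one n).symm⟩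

theorem le {d n : ℕ} : FloorQuotient d n → d ≤ n := by
  rintro ⟨k, -, rfl⟩
  exact Nat.div_le_self n k

theorem antisymm {d n : ℕ} (hdn : FloorQuotient d n) (hnd : FloorQuotient n d) : d = n :=
  le_antisymm hdn.le hnd.le

theorem trans {d m n : ℕ} : FloorQuotient d m → FloorQuotient m n → FloorQuotient d n := by
  rintro ⟨k, hk, rfl⟩ ⟨j, hj, rfl⟩
  exact ⟨j * k, Nat.mul_pos hj hk, Nat.div_div_eq_div_mul n j k⟩

theorem of_dvd {d n : ℕ} (hn : 0 < n) : d ∣ n → FloorQuotient d n := by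
  rintro ⟨c, rfl⟩
  have hc : 0 < c := Nat.pos_of_mul_pos_left hn
  exact ⟨c, hc, (Nat.mul_div_cancel d hc).symm⟩

end FloorQuotient

theorem floor_quotient_partial_order_and_approx_divisor :
    (∀ n : ℕ, 0 < n → FloorQuotient n n) ∧
    (∀ d n : ℕ, 0 < d → 0 < n → FloorQuotient d n → FloorQuotient n d → d = n) ∧
    (∀ d m n : ℕ, 0 < d → 0 < m → 0 < n →
      FloorQuotient d m → FloorQuotient m n → FloorQuotient d n) ∧
    (∀ d n : ℕ, 0 < d → 0 < n → d ∣ n → FloorQuotient d n) ∧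
    (∀ d n : ℕ, 0 < d → 0 < n → FloorQuotient d n → d ≤ n) :=
  ⟨fun n _ => FloorQuotient.refl n,
   fun _ _ _ _ => FloorQuotient.antisymm,
   fun _ _ _ _ _ _ => FloorQuotient.trans,
   fun _ _ _ hn => FloorQuotient.of_dvd hn,
   fun _ _ _ _ => FloorQuotient.le⟩
end

section
/- For positive integers d and n, the following are equivalent: (1) d = ⌊n/k⌋ for some positive integer k; (2) there exists a positive integer k with k·d ≤ n and n + 1 ≤ k·(d+1) (i.e. the interval k[d,d+1) covers [n,n+1)); (3) there exists a positive integer k such that n = d·k + r for some integer r with 0 ≤ r < min(d,k); (4) ⌊n/d⌋ > ⌊n/(d+1)⌋; (5) d = ⌊n/⌊n/d⌋⌋. -/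
namespace Nat

theorem eq_div_iff_mul_le_and_lt_mul {d n k : ℕ} (hk : 0 < k) :
    d = n / k ↔ k * d ≤ n ∧ n < k * (d + 1) := by
  rw [le_antisymm_iff, ← Nat.lt_succ_iff (m := n / k), Nat.le_div_iff_mul_le hk,
    Nat.div_lt_iff_lt_mul hk, Nat.mul_comm d, Nat.mul_comm (d + 1)]

theorem div_succ_lt_div_of_mul_le_of_lt_mul {d n k : ℕ} (hd : 0 < d)
    (hle : k * d ≤ n) (hlt : n < k * (d + 1)) : n / (d + 1) < n / d := by
  calc n / (d + 1) < k := (Nat.div_lt_iff_lt_mul d.succ_pos).2 hlt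
    _ ≤ n / d := (Nat.le_div_iff_mul_le hd).2 hle

theorem lt_div_mul_succ_of_div_succ_lt_div {d n : ℕ} (h : n / (d + 1) < n / d) :
    n < n / d * (d + 1) := by
  by_contra! hle
  exact h.not_ge ((Nat.le_div_iff_mul_le d.succ_pos).2 hle)

theorem mod_lt_div_of_lt_div_mul_succ {d n : ℕ} (h : n < n / d * (d + 1)) : n % d < n / d := by
  have hdiv := Nat.div_add_mod n d
  rw [Nat.mul_succ, Nat.mul_comm] at h
  omega

theorem div_pos_of_eq_div_div {d n : ℕ} (hd : 0 < d) (h : d = n / (n / d)) : 0 < n / d := by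
  refine Nat.pos_of_ne_zero fun h0 => ?_
  rw [h0, Nat.div_zero] at h
  omega

end Nat

theorem floor_quotient_characterizations_general (d n : ℕ) (hd : 0 < d) :
    [ FloorQuotient d n,
      ∃ k : ℕ, 0 < k ∧ k * d ≤ n ∧ n + 1 ≤ k * (d + 1),
      ∃ k r : ℕ, 0 < k ∧ n = d * k + r ∧ r < min d k,
      n / (d + 1) < n / d,
      d = n / (n / d) ].TFAE := by
  tfae_have 1 ↔ 2 := exists_congr fun k => and_congr_right Nat.eq_div_iff_mul_le_and_lt_mul
  tfae_have 2 → 4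
  | ⟨_, _, hle, hlt⟩ => Nat.div_succ_lt_div_of_mul_le_of_lt_mul hd hle hlt
  tfae_have 4 → 5 := fun h =>
    (Nat.eq_div_iff_mul_le_and_lt_mul (Nat.zero_lt_of_lt h)).2
      ⟨Nat.div_mul_le_self n d, Nat.lt_div_mul_succ_of_div_succ_lt_div h⟩
  tfae_have 5 → 1 := fun h => ⟨n / d, Nat.div_pos_of_eq_div_div hd h, h⟩
  tfae_have 5 → 3 := by
    intro h
    have hq := Nat.div_pos_of_eq_div_div hd h
    have hlt := ((Nat.eq_div_iff_mul_le_and_lt_mul hq).1 h).2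
    exact ⟨n / d, n % d, hq, (Nat.div_add_mod n d).symm,
      lt_min (Nat.mod_lt n hd) (Nat.mod_lt_div_of_lt_div_mul_succ hlt)⟩
  tfae_have 3 → 2
  | ⟨k, r, hk, hn, hr⟩ =>
    ⟨k, hk, by rw [Nat.mul_comm k d]; omega, by rw [Nat.mul_succ, Nat.mul_comm k d]; omega⟩
  tfae_finish

theorem floor_quotient_characterizations (d n : ℕ) (hd : 0 < d) (hn : 0 < n) :
    [ FloorQuotient d n,
      ∃ k : ℕ, 0 < k ∧ k * d ≤ n ∧ n + 1 ≤ k * (d + 1),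
      ∃ k r : ℕ, 0 < k ∧ n = d * k + r ∧ r < min d k,
      n / (d + 1) < n / d,
      d = n / (n / d) ].TFAE :=
  floor_quotient_characterizations_general d n hd
end

section
/- Suppose d and n are positive integers with d ≼₁ n. Then the cutting length set K(d,n) = {k ∈ ℕ⁺ : d = ⌊n/k⌋} contains exactly one element that is itself a floor quotient of n, namely k* = ⌊n/d⌋, and k* is the largest element of K(d,n). -/
/-- The cutting length set `K(d,n) = {k ∈ ℕ⁺ : d = ⌊n/k⌋}`. -/
def cutSet (d n : ℕ) : Set ℕ := {k : ℕ | 0 < k ∧ d = n / k}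

theorem le_div_comm_of_pos {n d k : ℕ} (hd : 0 < d) (hk : 0 < k) :
    k ≤ n / d ↔ d ≤ n / k := by
  rw [Nat.le_div_iff_mul_le hd, Nat.le_div_iff_mul_le hk, mul_comm]

theorem le_div_of_mem_cutSet {d n k : ℕ} (hd : 0 < d) (hk : k ∈ cutSet d n) : k ≤ n / d :=
  (le_div_comm_of_pos hd hk.1).2 hk.2.le

theorem div_div_eq_of_floorQuotient {d n : ℕ} (h : FloorQuotient d n) : n / (n / d) = d := by
  obtain rfl | hd := Nat.eq_zero_or_pos d
  · simp
  obtain ⟨k, hk⟩ := h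
  have hkq : k ≤ n / d := le_div_of_mem_cutSet hd hk
  apply le_antisymm
  · calc n / (n / d) ≤ n / k := Nat.div_le_div_left hkq hk.1
      _ = d := hk.2.symm
  · exact (le_div_comm_of_pos (hk.1.trans_le hkq) hd).2 le_rfl

theorem cutting_length_set_unique_floor_quotient_general (d n : ℕ) (hd : 0 < d)
    (h : FloorQuotient d n) :
    (n / d ∈ cutSet d n ∧ FloorQuotient (n / d) n) ∧
    (∀ k ∈ cutSet d n, FloorQuotient k n → k = n / d) ∧
    (∀ k ∈ cutSet d n, k ≤ n / d) := by
  have hmax : ∀ k ∈ cutSet d n, k ≤ n / d := fun k hk => le_div_of_mem_cutSet hd hk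
  have hinv : n / (n / d) = d := div_div_eq_of_floorQuotient h
  obtain ⟨k, hk⟩ := h
  refine ⟨⟨⟨hk.1.trans_le (hmax k hk), hinv.symm⟩, d, hd, rfl⟩, ?_, hmax⟩
  rintro k ⟨-, rfl⟩ hquot
  exact (div_div_eq_of_floorQuotient hquot).symm

theorem cutting_length_set_unique_floor_quotient (d n : ℕ) (hd : 0 < d) (hn : 0 < n)
    (h : FloorQuotient d n) :
    (n / d ∈ cutSet d n ∧ FloorQuotient (n / d) n) ∧
    (∀ k ∈ cutSet d n, FloorQuotient k n → k = n / d) ∧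
    (∀ k ∈ cutSet d n, k ≤ n / d) :=
  cutting_length_set_unique_floor_quotient_general d n hd h
end

section
/- For a positive integer d, the set M(d) = {n ∈ ℕ⁺ : d ≼₁ n} of floor multiples of d is closed under addition, contains every integer n ≥ d², and for d ≥ 2 the integer d² − 1 does not belong to M(d); hence for d ≥ 2, the largest positive integer not in M(d) is d² − 1. -/
/-- The set of floor multiples of `d`. -/
def floorMultiples (d : ℕ) : Set ℕ := {n : ℕ | 0 < n ∧ FloorQuotient d n}

theorem floorQuotient_iff {d n : ℕ} :
    FloorQuotient d n ↔ ∃ k, 0 < k ∧ d * k ≤ n ∧ n < (d + 1) * k := by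
  refine exists_congr fun k => and_congr_right fun hk => ?_
  rw [eq_comm, Nat.div_eq_iff hk, Nat.succ_mul]
  omega

theorem mem_floorMultiples_iff {d n : ℕ} :
    n ∈ floorMultiples d ↔ 0 < n ∧ ∃ k, 0 < k ∧ d * k ≤ n ∧ n < (d + 1) * k :=
  and_congr_right fun _ => floorQuotient_iff

theorem add_mem_floorMultiples {d m n : ℕ} (hm : m ∈ floorMultiples d)
    (hn : n ∈ floorMultiples d) : m + n ∈ floorMultiples d := by
  obtain ⟨hm0, k, hk0, hdk, hkm⟩ := mem_floorMultiples_iff.1 hm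
  obtain ⟨hn0, l, hl0, hdl, hln⟩ := mem_floorMultiples_iff.1 hn
  refine mem_floorMultiples_iff.2 ⟨by omega, k + l, by omega, ?_, ?_⟩ <;>
    rw [Nat.mul_add] <;> omega

theorem mem_floorMultiples_of_sq_le {d n : ℕ} (hd : 0 < d) (hn : d ^ 2 ≤ n) :
    n ∈ floorMultiples d := by
  have hdn : d ≤ n / d := (Nat.le_div_iff_mul_le hd).2 (by rwa [← sq])
  refine mem_floorMultiples_iff.2
    ⟨(pow_pos hd 2).trans_le hn, n / d, by omega, Nat.mul_div_le n d, ?_⟩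
  calc n < d * (n / d) + d := Nat.lt_mul_div_succ n hd
    _ ≤ (d + 1) * (n / d) := by rw [Nat.succ_mul]; omega

theorem sq_sub_one_notMem_floorMultiples (d : ℕ) : d ^ 2 - 1 ∉ floorMultiples d := by
  intro hmem
  obtain ⟨hpos, k, -, hdk, hlt⟩ := mem_floorMultiples_iff.1 hmem
  rw [sq] at hpos hdk hlt
  have hkd : k + 1 ≤ d := Nat.lt_of_mul_lt_mul_left (a := d) (by omega : d * k < d * d)
  have hmul := Nat.mul_le_mul_left (d + 1) hkd
  rw [Nat.mul_succ, Nat.succ_mul d d] at hmul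
  omega

theorem floor_multiples_semigroup_and_frobenius (d : ℕ) (hd : 0 < d) :
    (∀ m n : ℕ, m ∈ floorMultiples d → n ∈ floorMultiples d → m + n ∈ floorMultiples d) ∧
    (∀ n : ℕ, d ^ 2 ≤ n → n ∈ floorMultiples d) ∧
    (2 ≤ d →
      (d ^ 2 - 1 ∉ floorMultiples d) ∧
      (∀ n : ℕ, 0 < n → n ∉ floorMultiples d → n ≤ d ^ 2 - 1)) := by
  refine ⟨fun _ _ => add_mem_floorMultiples, fun _ => mem_floorMultiples_of_sq_le hd,
    fun _ => ⟨sq_sub_one_notMem_floorMultiples d, fun n _ hn => ?_⟩⟩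
  by_contra hlt
  exact hn (mem_floorMultiples_of_sq_le hd (by omega))
end

section
/- For a positive integer d, the number of positive integers not belonging to the set M(d) = {n ∈ ℕ⁺ : d ≼₁ n} of floor multiples of d is exactly (d−1)(d+2)/2. -/
/-!
Write `n = (d + 1) q + r` with `r ≤ d`. If `d = ⌊n / k⌋` then `n < (d + 1) k` forces `k > q`, and
`⌊n / k⌋` decreases in `k`; since also `n < (d + 1) (q + 1)`, `d` is a floor quotient of `n` iff
`d = ⌊n / (q + 1)⌋`, i.e. iff `d (q + 1) ≤ n`, i.e. iff `d ≤ q + r`. Hence the non-floor-multiples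
of `d`, together with `0`, are in bijection with the `d (d + 1) / 2` pairs `(q, r)` with `q + r < d`.
-/

open Finset.HasAntidiagonal

theorem floorQuotient_iff_mul_le (d n : ℕ) :
    FloorQuotient d n ↔ d * (n / (d + 1) + 1) ≤ n := by
  constructor
  · rintro ⟨k, hk, rfl⟩
    have hlt : n / (n / k + 1) < k :=
      (Nat.div_lt_iff_lt_mul (Nat.succ_pos _)).mpr (by
        simpa [mul_comm] using Nat.lt_mul_div_succ n hk)
    calc n / k * (n / (n / k + 1) + 1) ≤ n / k * k := Nat.mul_le_mul_left _ hlt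
      _ ≤ n := Nat.div_mul_le_self n k
  · intro h
    refine ⟨n / (d + 1) + 1, Nat.succ_pos _, (Nat.div_eq_of_lt_le h ?_).symm⟩
    simpa [mul_comm] using Nat.lt_mul_div_succ n (Nat.succ_pos d)

theorem floorQuotient_iff_le_div_add_mod (d n : ℕ) :
    FloorQuotient d n ↔ d ≤ n / (d + 1) + n % (d + 1) := by
  rw [floorQuotient_iff_mul_le]
  conv_lhs => rhs; rw [← Nat.div_add_mod n (d + 1)]
  constructor <;> intro h <;> nlinarith

theorem floorQuotient_zero_right_iff (d : ℕ) : FloorQuotient d 0 ↔ d = 0 := by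
  simp [floorQuotient_iff_le_div_add_mod]

theorem mem_biUnion_range_antidiagonal {d : ℕ} {p : ℕ × ℕ} :
    p ∈ (Finset.range d).biUnion antidiagonal ↔ p.1 + p.2 < d := by
  simp

theorem card_biUnion_range_antidiagonal (d : ℕ) :
    ((Finset.range d).biUnion antidiagonal).card = (d + 1) * d / 2 := by
  rw [Finset.card_biUnion]
  · have h := Finset.sum_range_succ' (fun s => s) d
    rw [Finset.sum_range_id, add_zero, Nat.add_sub_cancel] at h
    simpa only [Finset.Nat.card_antidiagonal] using h.symm
  · intro s _ t _ hst
    exact Finset.disjoint_left.mpr fun p hs ht =>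
      hst ((mem_antidiagonal.mp hs).symm.trans (mem_antidiagonal.mp ht))

theorem injOn_mul_add_of_snd_lt (m : ℕ) :
    Set.InjOn (fun p : ℕ × ℕ => m * p.1 + p.2) {p | p.2 < m} := by
  rintro ⟨q, r⟩ (hr : r < m) ⟨q', r'⟩ (hr' : r' < m) h
  have hm : 0 < m := by omega
  obtain rfl : q = q' := by
    simpa [Nat.mul_add_div hm, Nat.div_eq_of_lt hr, Nat.div_eq_of_lt hr'] using congrArg (· / m) h
  simpa using h

theorem setOf_not_floorQuotient (d : ℕ) :
    {n | ¬ FloorQuotient d n} =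
      ↑(((Finset.range d).biUnion antidiagonal).image fun p : ℕ × ℕ => (d + 1) * p.1 + p.2) := by
  ext n
  simp only [Set.mem_ofPred_eq, floorQuotient_iff_le_div_add_mod, not_le, Finset.coe_image,
    Set.mem_image, Finset.mem_coe, mem_biUnion_range_antidiagonal]
  constructor
  · intro h
    exact ⟨(n / (d + 1), n % (d + 1)), h, Nat.div_add_mod n (d + 1)⟩
  · rintro ⟨⟨q, r⟩, hqr : q + r < d, rfl⟩
    have hr : r < d + 1 := by omega
    rwa [Nat.mul_add_div (Nat.succ_pos d), Nat.div_eq_of_lt hr, add_zero, Nat.mul_add_mod,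
      Nat.mod_eq_of_lt hr]

theorem card_non_floor_multiples (d : ℕ) (hd : 0 < d) :
    {n : ℕ | 0 < n ∧ ¬ FloorQuotient d n}.ncard = (d - 1) * (d + 2) / 2 := by
  have hzero : ¬ FloorQuotient d 0 := by rw [floorQuotient_zero_right_iff]; omega
  have hset : {n : ℕ | 0 < n ∧ ¬ FloorQuotient d n} = {n | ¬ FloorQuotient d n} \ {0} := by
    ext n; simp [Nat.pos_iff_ne_zero, and_comm]
  have hinj : Set.InjOn (fun p : ℕ × ℕ => (d + 1) * p.1 + p.2)
      ↑((Finset.range d).biUnion antidiagonal) :=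
    (injOn_mul_add_of_snd_lt (d + 1)).mono fun p hp => by
      have := mem_biUnion_range_antidiagonal.mp hp
      show p.2 < d + 1
      omega
  rw [hset, Set.ncard_sdiff_singleton_of_mem hzero, setOf_not_floorQuotient, Set.ncard_coe_finset,
    Finset.card_image_of_injOn hinj, card_biUnion_range_antidiagonal]
  obtain ⟨m, rfl⟩ : ∃ m, d = m + 1 := ⟨d - 1, by omega⟩
  have hsplit : (m + 1 + 1) * (m + 1) = m * (m + 1 + 2) + 2 := by ring
  rw [hsplit, Nat.add_div_right _ two_pos, Nat.add_sub_cancel, Nat.add_sub_cancel]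
end

section
/- Let n be a positive integer. For all integers i, j with 1 ≤ i, j ≤ ⌊√n⌋, one has ⌊n/j⌋ ≼₁ ⌊n/i⌋ if and only if i divides j. Consequently the map k ↦ ⌊n/k⌋ defines an anti-isomorphism of posets from the set {1, 2, …, ⌊√n⌋} equipped with the divisibility order onto the set {⌊n/k⌋ : 1 ≤ k ≤ ⌊√n⌋} equipped with the floor quotient order. -/
namespace Nat

theorem le_div_self_of_le_sqrt {n a : ℕ} (has : a ≤ n.sqrt) : a ≤ n / a := by
  rcases a.eq_zero_or_pos with rfl | ha
  · exact zero_le _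
  · exact (le_div_iff_mul_le ha).2 (le_sqrt.1 has)

theorem div_succ_lt_div_of_le_sqrt {n a : ℕ} (ha : 0 < a) (has : a ≤ n.sqrt) :
    n / (a + 1) < n / a := by
  have hle : a ≤ n / a := le_div_self_of_le_sqrt has
  rw [div_lt_iff_lt_mul (succ_pos a)]
  calc n < n / a * a + a := lt_div_mul_add ha
    _ ≤ n / a * (a + 1) := by rw [Nat.mul_succ]; omega

theorem div_lt_div_of_lt_of_le_sqrt {n a b : ℕ} (ha : 0 < a) (has : a ≤ n.sqrt) (hab : a < b) :
    n / b < n / a :=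
  (div_le_div_left hab (succ_pos a)).trans_lt (div_succ_lt_div_of_le_sqrt ha has)

theorem eq_of_div_eq_div_of_le_sqrt {n a b : ℕ} (ha : 0 < a) (hb : 0 < b) (has : a ≤ n.sqrt)
    (h : n / a = n / b) : a = b := by
  rcases lt_trichotomy a b with hab | hab | hab
  · exact absurd h (div_lt_div_of_lt_of_le_sqrt ha has hab).ne'
  · exact hab
  · exact absurd h (div_lt_div_of_lt_of_le_sqrt hb (hab.le.trans has) hab).ne

theorem div_div_div_self (n k : ℕ) : n / (n / (n / k)) = n / k := by
  rcases (n / k).eq_zero_or_pos with hd | hd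
  · simp [hd]
  have hk : 0 < k := Nat.pos_of_ne_zero fun hk => by simp [hk] at hd
  have hkle : k ≤ n / (n / k) := (le_div_iff_mul_le hd).2 (mul_div_le n k)
  exact le_antisymm (div_le_div_left hkle hk)
    ((le_div_iff_mul_le (hk.trans_le hkle)).2 (mul_div_le n (n / k)))

end Nat

theorem floorQuotient_div_div_iff_dvd {n i j : ℕ} (hj : 0 < j) (hjs : j ≤ n.sqrt) :
    FloorQuotient (n / j) (n / i) ↔ i ∣ j := by
  rw [FloorQuotient]
  simp only [Nat.div_div_eq_div_mul]
  constructor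
  · rintro ⟨k, hk, h⟩
    have hi : 0 < i := Nat.pos_of_ne_zero fun hi => by
      have := Nat.le_div_self_of_le_sqrt hjs
      rw [h, hi, zero_mul, Nat.div_zero] at this
      omega
    exact ⟨k, Nat.eq_of_div_eq_div_of_le_sqrt hj (Nat.mul_pos hi hk) hjs h⟩
  · rintro ⟨k, rfl⟩
    exact ⟨k, Nat.pos_of_mul_pos_left hj, rfl⟩

theorem injOn_div_Icc_one_sqrt (n : ℕ) : Set.InjOn (fun k => n / k) (Set.Icc 1 n.sqrt) :=
  fun _ ha _ hb h => Nat.eq_of_div_eq_div_of_le_sqrt ha.1 hb.1 ha.2 h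

theorem floorQuotient_eq_div_div {d n : ℕ} (hd : FloorQuotient d n) : n / (n / d) = d := by
  obtain ⟨k, -, rfl⟩ := hd
  exact Nat.div_div_div_self n k

theorem surjOn_div_Icc_one_sqrt (n : ℕ) :
    Set.SurjOn (fun k => n / k) (Set.Icc 1 n.sqrt)
      {d : ℕ | 0 < d ∧ FloorQuotient d n ∧ n / d ≤ n.sqrt} := by
  rintro d ⟨hd, hq, hds⟩
  have hdn : d ≤ n := by
    obtain ⟨k, -, rfl⟩ := hq
    exact Nat.div_le_self n k
  exact ⟨n / d, ⟨(Nat.one_le_div_iff hd).2 hdn, hds⟩, floorQuotient_eq_div_div hq⟩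

theorem upper_interval_anti_isomorphic_to_divisor_order_general (n : ℕ) :
    (∀ i j : ℕ, 1 ≤ i → i ≤ Nat.sqrt n → 1 ≤ j → j ≤ Nat.sqrt n →
      (FloorQuotient (n / j) (n / i) ↔ i ∣ j)) ∧
    Set.InjOn (fun k => n / k) (Set.Icc 1 (Nat.sqrt n)) ∧
    Set.SurjOn (fun k => n / k) (Set.Icc 1 (Nat.sqrt n))
      {d : ℕ | 0 < d ∧ FloorQuotient d n ∧ n / d ≤ Nat.sqrt n} :=
  ⟨fun _ _ _ _ hj hjs => floorQuotient_div_div_iff_dvd hj hjs,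
    injOn_div_Icc_one_sqrt n, surjOn_div_Icc_one_sqrt n⟩

theorem upper_interval_anti_isomorphic_to_divisor_order (n : ℕ) (hn : 0 < n) :
    (∀ i j : ℕ, 1 ≤ i → i ≤ Nat.sqrt n → 1 ≤ j → j ≤ Nat.sqrt n →
      (FloorQuotient (n / j) (n / i) ↔ i ∣ j)) ∧
    Set.InjOn (fun k => n / k) (Set.Icc 1 (Nat.sqrt n)) ∧
    Set.SurjOn (fun k => n / k) (Set.Icc 1 (Nat.sqrt n))
      {d : ℕ | 0 < d ∧ FloorQuotient d n ∧ n / d ≤ Nat.sqrt n} :=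
  upper_interval_anti_isomorphic_to_divisor_order_general n
end

section
/- For all positive integers d and n, the floor quotient interval Q[d,n] = {e ∈ ℕ⁺ : d ≼₁ e and e ≼₁ n} has cardinality at most (3/2)·(n/d)^{2/3}. -/
/-!
Fix a cutoff `m` and write `e = n / k`, `d = e / j`. If `k ≤ n / (d (m + 1))`, then `e` is one of
at most `n / (d (m + 1))` values `n / k`. Otherwise `e < d (m + 1)`, so `j ≤ m` and `e` lies in the
block `[d j, d j + j)` of length `j`; these blocks contribute at most `m (m + 1) / 2` elements.
Choosing `m = ⌊t⌋` with `t = (n / d)^{1/3}` balances the two terms below `(3/2) t²`.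
-/

open Finset

def floorQuotientInterval (d n : ℕ) : Set ℕ := {e | FloorQuotient d e ∧ FloorQuotient e n}

lemma FloorQuotient.exists_mem_Ico {d e : ℕ} (h : FloorQuotient d e) :
    ∃ j, 0 < j ∧ e ∈ Ico (d * j) (d * j + j) := by
  obtain ⟨j, hj, rfl⟩ := h
  exact ⟨j, hj, mem_Ico.2 ⟨Nat.div_mul_le_self e j, Nat.lt_div_mul_add hj⟩⟩

lemma Nat.div_lt_comm {n c k : ℕ} (hc : 0 < c) (hk : 0 < k) : n / c < k ↔ n / k < c := by
  rw [Nat.div_lt_iff_lt_mul hc, Nat.div_lt_iff_lt_mul hk, mul_comm]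

lemma floorQuotientInterval_subset {d : ℕ} (hd : 0 < d) (n m : ℕ) :
    floorQuotientInterval d n ⊆
      ↑((Icc 1 (n / (d * (m + 1)))).image (n / ·) ∪
        (range (m + 1)).biUnion fun j => Ico (d * j) (d * j + j)) := by
  rintro e ⟨hde, k, hk, rfl⟩
  obtain ⟨j, -, hmem⟩ := hde.exists_mem_Ico
  simp only [coe_union, coe_image, coe_biUnion, coe_range, Set.mem_union, Set.mem_image,
    Set.mem_iUnion, mem_coe, mem_Icc, Set.mem_Iio]
  by_cases hkK : k ≤ n / (d * (m + 1))
  · exact Or.inl ⟨k, ⟨hk, hkK⟩, rfl⟩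
  · have hsmall : n / k < d * (m + 1) := (Nat.div_lt_comm (by positivity) hk).1 (by omega)
    have hjm : j < m + 1 :=
      Nat.lt_of_mul_lt_mul_left ((mem_Ico.1 hmem).1.trans_lt hsmall)
    exact Or.inr ⟨j, hjm, hmem⟩

lemma ncard_floorQuotientInterval_le {d : ℕ} (hd : 0 < d) (n m : ℕ) :
    (floorQuotientInterval d n).ncard ≤ n / (d * (m + 1)) + m * (m + 1) / 2 := by
  refine (Set.ncard_le_ncard (floorQuotientInterval_subset hd n m)).trans ?_
  rw [Set.ncard_coe_finset]
  refine (card_union_le _ _).trans (add_le_add ?_ ?_)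
  · exact card_image_le.trans (by simp)
  · calc _ ≤ ∑ j ∈ range (m + 1), (Ico (d * j) (d * j + j)).card := card_biUnion_le
      _ = ∑ j ∈ range (m + 1), j := by simp
      _ = m * (m + 1) / 2 := by rw [sum_range_id, Nat.add_sub_cancel, mul_comm]

lemma cube_div_succ_add_le (m : ℕ) {t : ℝ} (hmt : m ≤ t) (htm : t ≤ m + 1) :
    t ^ 3 / (m + 1) + m * (m + 1) / 2 ≤ 3 / 2 * t ^ 2 := by
  -- `3 (m + 1) t² - 2 t³ - m (m + 1)²` is `m (m - 1) ≥ 0` at `t = m` and increases on `[m, m + 1]`.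
  have hm : (0 : ℝ) ≤ m * (m - 1) := by
    rcases Nat.eq_zero_or_pos m with rfl | hm
    · simp
    · exact mul_nonneg (Nat.cast_nonneg m) (by simp [Nat.one_le_cast.2 hm])
  rw [div_add_div _ _ (by positivity) two_ne_zero, div_le_iff₀ (by positivity)]
  nlinarith [mul_nonneg (sub_nonneg.2 hmt) (sub_nonneg.2 htm),
    mul_nonneg (mul_nonneg (sub_nonneg.2 hmt) (sub_nonneg.2 hmt)) (sub_nonneg.2 htm),
    mul_nonneg (sub_nonneg.2 hmt) (Nat.cast_nonneg (α := ℝ) m)]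

lemma div_floor_cbrt_succ_add_le {x : ℝ} (hx : 0 ≤ x) :
    x / (⌊x ^ (1 / 3 : ℝ)⌋₊ + 1) + ⌊x ^ (1 / 3 : ℝ)⌋₊ * (⌊x ^ (1 / 3 : ℝ)⌋₊ + 1) / 2 ≤
      3 / 2 * x ^ (2 / 3 : ℝ) := by
  set t := x ^ (1 / 3 : ℝ)
  have ht : 0 ≤ t := by positivity
  have hcube : t ^ 3 = x := by
    rw [← Real.rpow_natCast, ← Real.rpow_mul hx]; norm_num
  have hsq : x ^ (2 / 3 : ℝ) = t ^ 2 := by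
    rw [← Real.rpow_natCast, ← Real.rpow_mul hx]; norm_num
  rw [hsq]
  nth_rw 1 [← hcube]
  exact cube_div_succ_add_le _ (Nat.floor_le ht) (Nat.lt_floor_add_one t).le

theorem interval_size_upper_bound_general (d n : ℕ) (hd : 0 < d) :
    ({e : ℕ | FloorQuotient d e ∧ FloorQuotient e n}.ncard : ℝ) ≤
      (3 / 2) * ((n : ℝ) / d) ^ ((2 : ℝ) / 3) := by
  set x : ℝ := n / d
  set m := ⌊x ^ (1 / 3 : ℝ)⌋₊
  have hcount := ncard_floorQuotientInterval_le hd n m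
  calc _ ≤ ((n / (d * (m + 1)) : ℕ) : ℝ) + ((m * (m + 1) / 2 : ℕ) : ℝ) := by
        exact_mod_cast hcount
    _ ≤ x / (m + 1) + m * (m + 1) / 2 := by
        gcongr
        · exact Nat.cast_div_le.trans_eq (by push_cast; rw [div_div])
        · exact Nat.cast_div_le.trans_eq (by push_cast; rfl)
    _ ≤ 3 / 2 * x ^ (2 / 3 : ℝ) := div_floor_cbrt_succ_add_le (by positivity)

theorem interval_size_upper_bound (d n : ℕ) (hd : 0 < d) (hn : 0 < n) :
    ({e : ℕ | FloorQuotient d e ∧ FloorQuotient e n}.ncard : ℝ) ≤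
      (3 / 2) * ((n : ℝ) / d) ^ ((2 : ℝ) / 3) :=
  interval_size_upper_bound_general d n hd
end

section
/- Define the differenced Möbius function Δμ₁(1,m) = μ₁(1,m) − μ₁(1,m−1) for m ≥ 1 (with the convention μ₁(1,0) = 0), where μ₁ is the Möbius function of the floor quotient partial order. Then for every integer n ≥ 3, the sum of Δμ₁(1,d) over all divisors d of n with d > √n equals 0 if n is neither of the form s² nor s(s+1) for a positive integer s, and equals −μ₁(1,s) if n = s² or n = s(s+1) (in which case s = ⌊√n⌋). -/
/-!
Write `χₙ(e)` for the indicator of `e ≼₁ n`. For `0 < e` we have `e ≼₁ n` iff `⌊n/(e+1)⌋ < ⌊n/e⌋`.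
This always holds once `e(e+1) ≤ n`, while for `n ≤ e(e+1)` the two quotients differ by at most
one, so that `χₙ(e) = ⌊n/e⌋ - ⌊n/(e+1)⌋`. Hence `χₙ(e) - χₙ₋₁(e)` is `[e ∣ n] - [e+1 ∣ n]` for
`n ≤ e(e+1)` and `0` otherwise. Summing against `μ₁(1,e)` and using `∑_{e ≼₁ m} μ₁(1,e) = 0` for
`m = n` and `m = n - 1` gives
`0 = ∑_{d ∣ n, d² > n} (μ₁(1,d) - μ₁(1,d-1)) + ∑_{n = e² ∨ n = e(e+1)} μ₁(1,e)`,
and the only `e` that can occur in the last sum is `⌊√n⌋`.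
-/

open Finset

theorem floorQuotient_one {m : ℕ} (hm : 0 < m) : FloorQuotient 1 m :=
  ⟨m, hm, (Nat.div_self hm).symm⟩

theorem floorQuotient_iff_div_succ_lt_div {e n : ℕ} (he : 0 < e) :
    FloorQuotient e n ↔ n / (e + 1) < n / e := by
  constructor
  · rintro ⟨k, hk, rfl⟩
    calc n / (n / k + 1) < k := (Nat.div_lt_iff_lt_mul (by omega)).2 (Nat.lt_mul_div_succ n hk)
      _ ≤ n / (n / k) := (Nat.le_div_iff_mul_le he).2 (Nat.mul_div_le n k)
  · intro h
    have hk : 0 < n / e := (Nat.zero_le _).trans_lt h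
    refine ⟨n / e, hk, le_antisymm ?_ (Nat.lt_succ_iff.1 ?_)⟩
    · rw [Nat.le_div_iff_mul_le hk, mul_comm]
      exact Nat.div_mul_le_self n e
    · rw [Nat.div_lt_iff_lt_mul hk, mul_comm]
      exact (Nat.div_lt_iff_lt_mul (by omega)).1 h

theorem floorQuotient_of_mul_succ_le {e n : ℕ} (he : 0 < e) (h : e * (e + 1) ≤ n) :
    FloorQuotient e n := by
  rw [floorQuotient_iff_div_succ_lt_div he]
  have hq : e ≤ n / (e + 1) := (Nat.le_div_iff_mul_le (by omega)).2 h
  have hqn : n / (e + 1) * (e + 1) ≤ n := Nat.div_mul_le_self n (e + 1)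
  exact (Nat.le_div_iff_mul_le he).2 (by nlinarith)

theorem div_le_div_succ_add_one {e n : ℕ} (h : n ≤ e * (e + 1)) : n / e ≤ n / (e + 1) + 1 := by
  rcases Nat.eq_zero_or_pos e with rfl | he
  · simp
  have hq : n / (e + 1) * (e + 1) ≤ n := Nat.div_mul_le_self n (e + 1)
  have hqn : n < (e + 1) * (n / (e + 1) + 1) := Nat.lt_mul_div_succ n (by omega)
  refine Nat.lt_succ_iff.1 ((Nat.div_lt_iff_lt_mul he).2 ?_)
  rcases Nat.lt_or_ge (n / (e + 1)) e with hlt | hge <;> nlinarith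

open scoped Classical in
theorem ite_floorQuotient_add_div_succ {e n : ℕ} (he : 0 < e) (h : n ≤ e * (e + 1)) :
    (if FloorQuotient e n then 1 else 0) + n / (e + 1) = n / e := by
  have hle : n / (e + 1) ≤ n / e := Nat.div_le_div_left (Nat.le_succ e) he
  have hle' := div_le_div_succ_add_one h
  rw [floorQuotient_iff_div_succ_lt_div he]
  split_ifs <;> omega

theorem eq_mul_of_dvd_of_mul_le_of_lt_mul_succ {d k n : ℕ} (hd : d ∣ n) (hle : d * k ≤ n)
    (hlt : n < d * (k + 1)) : n = d * k := by
  rw [← Nat.mul_div_cancel' hd, Nat.div_eq_of_lt_le (by rwa [mul_comm]) (by rwa [mul_comm])]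

open scoped Classical in
theorem ite_floorQuotient_succ_sub_ite {e n : ℕ} (he : 0 < e) :
    (if FloorQuotient e (n + 1) then 1 else 0 : ℤ) - (if FloorQuotient e n then 1 else 0) =
      if n + 1 ≤ e * (e + 1) then (if e ∣ n + 1 then 1 else 0) - (if e + 1 ∣ n + 1 then 1 else 0)
      else 0 := by
  by_cases h : n + 1 ≤ e * (e + 1)
  · have hsucc := ite_floorQuotient_add_div_succ he h
    have hself := ite_floorQuotient_add_div_succ he (Nat.le_of_succ_le h)
    have hdiv := @Nat.succ_div n e
    have hdiv' := @Nat.succ_div n (e + 1)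
    rw [if_pos h]
    split_ifs at * <;> omega
  · rw [if_pos (floorQuotient_of_mul_succ_le he (by omega)),
      if_pos (floorQuotient_of_mul_succ_le he (by omega)), if_neg h, sub_self]

open scoped Classical in
theorem ite_le_mul_succ_eq_ite_dvd_sub_ite_dvd {e n : ℕ} (he : 0 < e) :
    (if n ≤ e * (e + 1) then (if e ∣ n then 1 else 0) - (if e + 1 ∣ n then 1 else 0) else 0 : ℤ) =
      (if e ∣ n ∧ n < e ^ 2 then 1 else 0) - (if e + 1 ∣ n ∧ n < (e + 1) ^ 2 then 1 else 0) +
        (if n = e ^ 2 ∨ n = e * (e + 1) then 1 else 0) := by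
  have hsq : e ^ 2 < e * (e + 1) := by nlinarith
  have hsq' : e * (e + 1) < (e + 1) ^ 2 := by nlinarith
  rcases lt_trichotomy n (e * (e + 1)) with h | rfl | h
  · have hne : n ≠ e * (e + 1) := h.ne
    have hlt' : n < (e + 1) ^ 2 := h.trans hsq'
    rw [if_pos h.le]
    simp only [and_iff_left hlt']
    by_cases hd : e ∣ n
    · rcases lt_or_ge n (e ^ 2) with hlt | hge
      · simp [hd, hlt, hlt.ne, hne]
      · have hsq_eq : n = e ^ 2 := sq e ▸ eq_mul_of_dvd_of_mul_le_of_lt_mul_succ hd (sq e ▸ hge) h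
        have hor : n = e ^ 2 ∨ n = e * (e + 1) := .inl hsq_eq
        simp only [hd, hge.not_gt, hor, if_true, and_false, if_false]
        ring
    · have hnsq : n ≠ e ^ 2 := fun hsq_eq => hd (hsq_eq ▸ dvd_pow_self e two_ne_zero)
      simp [hd, hnsq, hne]
  · have hd : e ∣ e * (e + 1) := Dvd.intro _ rfl
    have hd' : e + 1 ∣ e * (e + 1) := Dvd.intro_left _ rfl
    rw [if_pos le_rfl, if_pos hd, if_pos hd', if_neg (fun h => hsq.not_gt h.2), if_pos ⟨hd', hsq'⟩,
      if_pos (.inr rfl)]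
    norm_num
  · have hnsq : ¬ (e + 1 ∣ n ∧ n < (e + 1) ^ 2) := fun ⟨hd, hlt⟩ => by
      have := eq_mul_of_dvd_of_mul_le_of_lt_mul_succ hd (by nlinarith) (by nlinarith)
      nlinarith
    have hnsq' : ¬ (e ∣ n ∧ n < e ^ 2) := fun ⟨_, hlt⟩ => by omega
    have hor : ¬ (n = e ^ 2 ∨ n = e * (e + 1)) := by omega
    rw [if_neg h.not_ge, if_neg hnsq, if_neg hnsq', if_neg hor]
    norm_num

section

variable {M : Type*} [AddCommMonoid M]

theorem sum_Icc_ite_dvd_and (f : ℕ → M) (n : ℕ) (p : ℕ → Prop) [DecidablePred p] :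
    ∑ e ∈ Icc 1 n, (if e ∣ n ∧ p e then f e else 0) = ∑ d ∈ n.divisors with p d, f d := by
  rw [← sum_filter]
  congr 1
  ext e
  simp only [mem_filter, mem_Icc, Nat.mem_divisors]
  constructor
  · rintro ⟨⟨he, hen⟩, hd, hp⟩
    exact ⟨⟨hd, by omega⟩, hp⟩
  · rintro ⟨⟨hd, hn⟩, hp⟩
    have hn := Nat.pos_of_ne_zero hn
    exact ⟨⟨Nat.pos_of_dvd_of_pos hd hn, Nat.le_of_dvd hn hd⟩, hd, hp⟩

theorem sum_Icc_ite_succ_dvd_and (f : ℕ → M) (n : ℕ) (p : ℕ → Prop) [DecidablePred p]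
    (hp : ¬ p 1) :
    ∑ e ∈ Icc 1 n, (if e + 1 ∣ n ∧ p (e + 1) then f e else 0) =
      ∑ d ∈ n.divisors with p d, f (d - 1) := by
  have htwo : ∀ d ∈ n.divisors.filter p, 2 ≤ d := fun d hd => by
    obtain ⟨hdn, hpd⟩ := mem_filter.1 hd
    have hd1 : d ≠ 1 := by rintro rfl; exact hp hpd
    have hd0 := Nat.pos_of_mem_divisors hdn
    omega
  rw [← sum_filter]
  apply sum_nbij' (· + 1) (· - 1)
  · simp only [mem_filter, mem_Icc, Nat.mem_divisors]
    rintro e ⟨⟨he, hen⟩, hd, hpe⟩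
    exact ⟨⟨hd, by omega⟩, hpe⟩
  · intro d hd
    have hd2 := htwo d hd
    have hdn := Nat.divisor_le (mem_filter.1 hd).1
    simp only [mem_filter, mem_Icc, Nat.mem_divisors] at hd ⊢
    rw [Nat.sub_add_cancel (by omega)]
    exact ⟨⟨by omega, by omega⟩, hd.1.1, hd.2⟩
  · simp
  · intro d hd
    have hd2 := htwo d hd
    show d - 1 + 1 = d
    omega
  · simp

theorem eq_sqrt_of_eq_sq_or_eq_mul_succ {e n : ℕ} (h : n = e ^ 2 ∨ n = e * (e + 1)) :
    e = Nat.sqrt n := by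
  rcases h with rfl | rfl
  · exact (Nat.sqrt_eq' e).symm
  · rw [show e * (e + 1) = e ^ 2 + e by ring, Nat.sqrt_add_eq' e (Nat.le_add_right e e)]

theorem sum_Icc_ite_eq_sq_or_eq_mul_succ (f : ℕ → M) {n s : ℕ} (hs : 0 < s)
    (h : n = s ^ 2 ∨ n = s * (s + 1)) :
    ∑ e ∈ Icc 1 n, (if n = e ^ 2 ∨ n = e * (e + 1) then f e else 0) = f s := by
  have hsn : s ≤ n := by rcases h with rfl | rfl <;> nlinarith
  rw [sum_eq_single_of_mem s (mem_Icc.2 ⟨hs, hsn⟩) fun e _ hne => if_neg fun he =>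
    hne ((eq_sqrt_of_eq_sq_or_eq_mul_succ he).trans (eq_sqrt_of_eq_sq_or_eq_mul_succ h).symm),
    if_pos h]

end

open scoped Classical in
theorem sum_floorQuotient_succ_sub_sum_floorQuotient (f : ℕ → ℤ) (n : ℕ) :
    ∑ e ∈ Icc 1 (n + 1), (if FloorQuotient e (n + 1) then f e else 0) -
        ∑ e ∈ Icc 1 n, (if FloorQuotient e n then f e else 0) =
      ∑ d ∈ (n + 1).divisors with n + 1 < d ^ 2, (f d - f (d - 1)) +
        ∑ e ∈ Icc 1 (n + 1), if n + 1 = e ^ 2 ∨ n + 1 = e * (e + 1) then f e else 0 := by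
  have hlast : ¬ FloorQuotient (n + 1) n := by
    rw [floorQuotient_iff_div_succ_lt_div (by omega), Nat.div_eq_of_lt (by omega),
      Nat.div_eq_of_lt (by omega)]
    exact lt_irrefl 0
  have hext : ∑ e ∈ Icc 1 n, (if FloorQuotient e n then f e else 0) =
      ∑ e ∈ Icc 1 (n + 1), (if FloorQuotient e n then f e else 0) := by
    rw [sum_Icc_succ_top (by omega), if_neg hlast, add_zero]
  calc _ = ∑ e ∈ Icc 1 (n + 1), ((if FloorQuotient e (n + 1) then 1 else 0 : ℤ) -
        (if FloorQuotient e n then 1 else 0)) * f e := by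
        rw [hext, ← sum_sub_distrib]
        simp only [sub_mul, boole_mul]
    _ = ∑ e ∈ Icc 1 (n + 1), ((if e ∣ n + 1 ∧ n + 1 < e ^ 2 then 1 else 0 : ℤ) -
        (if e + 1 ∣ n + 1 ∧ n + 1 < (e + 1) ^ 2 then 1 else 0) +
        (if n + 1 = e ^ 2 ∨ n + 1 = e * (e + 1) then 1 else 0)) * f e := by
        refine sum_congr rfl fun e he => ?_
        have he : 0 < e := (mem_Icc.1 he).1
        rw [ite_floorQuotient_succ_sub_ite he, ite_le_mul_succ_eq_ite_dvd_sub_ite_dvd he]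
    _ = _ := by
        simp only [add_mul, sub_mul, boole_mul, sum_add_distrib, sum_sub_distrib,
          sum_Icc_ite_dvd_and,
          sum_Icc_ite_succ_dvd_and f (n + 1) (fun d => n + 1 < d ^ 2) (by simp)]

open scoped Classical in
theorem differenced_mobius_recursion_general (μ₁ : ℕ → ℕ → ℤ)
    -- defining properties of the Möbius function of the floor quotient order
    (hrec : ∀ d n : ℕ, 0 < d → FloorQuotient d n → d ≠ n →
      ∑ e ∈ (Finset.Icc d n).filter
        (fun e => FloorQuotient d e ∧ FloorQuotient e n), μ₁ d e = 0)
    (n : ℕ) (hn : 3 ≤ n) :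
    -- the differenced Möbius function `Δμ₁(1,m) = μ₁(1,m) - μ₁(1,m-1)`
    let Δ : ℕ → ℤ := fun m => μ₁ 1 m - μ₁ 1 (m - 1)
    ((¬ ∃ s : ℕ, 0 < s ∧ (n = s ^ 2 ∨ n = s * (s + 1))) →
      ∑ d ∈ n.divisors.filter (fun d => Nat.sqrt n < d), Δ d = 0) ∧
    (∀ s : ℕ, 0 < s → (n = s ^ 2 ∨ n = s * (s + 1)) →
      ∑ d ∈ n.divisors.filter (fun d => Nat.sqrt n < d), Δ d = - μ₁ 1 s) := by
  intro Δ
  have hmobius : ∀ m, 2 ≤ m → ∑ e ∈ Icc 1 m, (if FloorQuotient e m then μ₁ 1 e else 0) = 0 :=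
    fun m hm => by
      rw [← sum_filter, ← hrec 1 m one_pos (floorQuotient_one (by omega)) (by omega)]
      refine sum_congr (filter_congr fun e he => ?_) fun _ _ => rfl
      simp [floorQuotient_one (mem_Icc.1 he).1]
  obtain ⟨m, rfl⟩ : ∃ m, n = m + 1 := ⟨n - 1, by omega⟩
  have hsum := sum_floorQuotient_succ_sub_sum_floorQuotient (μ₁ 1) m
  rw [hmobius (m + 1) (by omega), hmobius m (by omega), sub_zero, eq_comm,
    ← eq_neg_iff_add_eq_zero] at hsum
  have hΔ : ∑ d ∈ (m + 1).divisors.filter (fun d => Nat.sqrt (m + 1) < d), Δ d =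
      -∑ e ∈ Icc 1 (m + 1), if m + 1 = e ^ 2 ∨ m + 1 = e * (e + 1) then μ₁ 1 e else 0 := by
    simpa only [Nat.sqrt_lt'] using hsum
  refine ⟨fun hno => ?_, fun s hs hsn => ?_⟩
  · rw [hΔ, neg_eq_zero]
    exact sum_eq_zero fun e he => if_neg fun h => hno ⟨e, (mem_Icc.1 he).1, h⟩
  · rw [hΔ, sum_Icc_ite_eq_sq_or_eq_mul_succ _ hs hsn]

open scoped Classical in
theorem differenced_mobius_recursion (μ₁ : ℕ → ℕ → ℤ)
    -- defining properties of the Möbius function of the floor quotient order,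
    -- together with the convention `μ₁(1,0) = 0`
    (hconv : μ₁ 1 0 = 0)
    (hrefl : ∀ d : ℕ, 0 < d → μ₁ d d = 1)
    (hzero : ∀ d n : ℕ, 0 < d → 0 < n → ¬ FloorQuotient d n → μ₁ d n = 0)
    (hrec : ∀ d n : ℕ, 0 < d → FloorQuotient d n → d ≠ n →
      ∑ e ∈ (Finset.Icc d n).filter
        (fun e => FloorQuotient d e ∧ FloorQuotient e n), μ₁ d e = 0)
    (n : ℕ) (hn : 3 ≤ n) :
    -- the differenced Möbius function `Δμ₁(1,m) = μ₁(1,m) - μ₁(1,m-1)`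
    let Δ : ℕ → ℤ := fun m => μ₁ 1 m - μ₁ 1 (m - 1)
    ((¬ ∃ s : ℕ, 0 < s ∧ (n = s ^ 2 ∨ n = s * (s + 1))) →
      ∑ d ∈ n.divisors.filter (fun d => Nat.sqrt n < d), Δ d = 0) ∧
    (∀ s : ℕ, 0 < s → (n = s ^ 2 ∨ n = s * (s + 1)) →
      ∑ d ∈ n.divisors.filter (fun d => Nat.sqrt n < d), Δ d = - μ₁ 1 s) :=
  differenced_mobius_recursion_general μ₁ hrec n hn
end
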